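/- For a single coordinate, the clamped sign-gradient iteration x_{t+1} = clamp(x_t + α·sgn(d − x_t), −ε, ε) with |d| ≤ ε, |x_0| ≤ ε, and α > 0 satisfies |x_{t+1} − d| ≤ max(|x_t − d| − α, α); consequently for all t ≥ |x_0 − d|/α one has |x_t − d| ≤ α. -/

import Mathlib

/-!
Clamping to `[-ε, ε]` is a projection onto an interval containing `d`, so it never increases the
distance to `d`. Before clamping, a sign step of length `α` either moves `α` closer to `d` or
overshoots it by at most `α`. Iterating the resulting bound `e (t+1) ≤ max (e t - α) α` gives
`e t ≤ max (e 0 - t α) α`.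
-/

theorem abs_clamp_sub_le {ε d : ℝ} (hd : |d| ≤ ε) (z : ℝ) :
    |max (-ε) (min ε z) - d| ≤ |z - d| := by
  obtain ⟨hdl, hdu⟩ := abs_le.mp hd
  calc |max (-ε) (min ε z) - d| = |max (min ε z) (-ε) - max (min ε d) (-ε)| := by
        rw [max_comm, min_eq_right hdu, max_eq_left hdl]
    _ ≤ |min ε z - min ε d| := abs_max_sub_max_le_abs _ _ _
    _ ≤ |z - d| := by
        simpa only [sub_self, abs_zero, max_eq_right (abs_nonneg (z - d))]
          using abs_min_sub_min_le_max ε z ε d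

theorem abs_add_mul_sign_sub_le {α : ℝ} (hα : 0 ≤ α) (y d : ℝ) :
    |y + α * Real.sign (d - y) - d| ≤ max (|y - d| - α) α := by
  rcases lt_trichotomy y d with h | rfl | h
  · rw [Real.sign_of_pos (sub_pos.mpr h), mul_one, abs_of_neg (sub_neg.mpr h)]
    rcases le_total α (d - y) with hfar | hnear
    · exact le_max_of_le_left (by rw [abs_of_nonpos (by linarith)]; linarith)
    · exact le_max_of_le_right (abs_le.mpr ⟨by linarith, by linarith⟩)
  · simp [hα]
  · rw [Real.sign_of_neg (sub_neg.mpr h), mul_neg_one, abs_of_pos (sub_pos.mpr h)]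
    rcases le_total α (y - d) with hfar | hnear
    · exact le_max_of_le_left (by rw [abs_of_nonneg (by linarith)]; linarith)
    · exact le_max_of_le_right (abs_le.mpr ⟨by linarith, by linarith⟩)

theorem le_max_sub_mul_of_forall_succ_le {α : ℝ} (hα : 0 ≤ α) {e : ℕ → ℝ}
    (he : ∀ t, e (t + 1) ≤ max (e t - α) α) (t : ℕ) :
    e t ≤ max (e 0 - t * α) α := by
  induction t with
  | zero => simp
  | succ n ih =>
    calc e (n + 1) ≤ max (e n - α) α := he n
      _ ≤ max (max (e 0 - n * α) α - α) α := by gcongr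
      _ = max (e 0 - (n + 1 : ℕ) * α) α := by
        rw [← max_sub_sub_right, max_assoc, max_eq_right (by linarith : α - α ≤ α)]
        push_cast
        ring_nf

theorem le_of_forall_succ_le_max_sub {α : ℝ} (hα : 0 < α) {e : ℕ → ℝ}
    (he : ∀ t, e (t + 1) ≤ max (e t - α) α) {t : ℕ} (ht : e 0 / α ≤ t) :
    e t ≤ α := by
  have h0 : e 0 - t * α ≤ 0 := by
    rw [div_le_iff₀ hα] at ht
    linarith
  exact (le_max_sub_mul_of_forall_succ_le hα.le he t).trans (max_le (by linarith) le_rfl)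

theorem stmt9_general (ε α d : ℝ) (hα : 0 < α)
    (hd : |d| ≤ ε) (x : ℕ → ℝ)
    (hrec : ∀ t, x (t + 1) = max (-ε) (min ε (x t + α * Real.sign (d - x t)))) :
    (∀ t, |x (t + 1) - d| ≤ max (|x t - d| - α) α) ∧
    (∀ t : ℕ, |x 0 - d| / α ≤ t → |x t - d| ≤ α) := by
  have hstep : ∀ t, |x (t + 1) - d| ≤ max (|x t - d| - α) α := fun t => by
    rw [hrec t]
    exact (abs_clamp_sub_le hd _).trans (abs_add_mul_sign_sub_le hα.le (x t) d)
  exact ⟨hstep, fun _ => le_of_forall_succ_le_max_sub (e := fun t => |x t - d|) hα hstep⟩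

theorem stmt9 (ε α d : ℝ) (hε : 0 < ε) (hα : 0 < α)
    (hd : |d| ≤ ε) (x : ℕ → ℝ) (hx0 : |x 0| ≤ ε)
    (hrec : ∀ t, x (t + 1) = max (-ε) (min ε (x t + α * Real.sign (d - x t)))) :
    (∀ t, |x (t + 1) - d| ≤ max (|x t - d| - α) α) ∧
    (∀ t : ℕ, |x 0 - d| / α ≤ t → |x t - d| ≤ α) :=
  stmt9_general ε α d hα hd x hrec
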